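/- A 2-hybrid network is 1-nested if and only if it is a weakly galled tree: in a rooted DAG whose hybrid nodes all have in-degree 2, no node is intermediate in reticulation cycles for two different hybrid nodes if and only if every pair of distinct reticulation cycles have disjoint arc sets. -/

import Mathlib

/-- An evolutionary network: a rooted directed acyclic graph. -/
structure EvoNet (V : Type*) where
  arc : V → V → Prop
  root : V
  acyclic : ∀ v : V, ¬ Relation.TransGen arc v v
  rooted : ∀ v : V, Relation.ReflTransGen arc root v

namespace EvoNet

variable {V : Type*}

/-- A hybrid node: in-degree at least 2. -/
def IsHybrid (N : EvoNet V) (v : V) : Prop :=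
  ∃ u w : V, u ≠ w ∧ N.arc u v ∧ N.arc w v

/-- A tree node: in-degree at most 1. -/
def IsTreeNode (N : EvoNet V) (v : V) : Prop := ¬ N.IsHybrid v

/-- A (directed) path, given as its nonempty list of nodes. -/
def IsPath (N : EvoNet V) (p : List V) : Prop := p ≠ [] ∧ p.Chain' N.arc

/-- The intermediate (non-endpoint) nodes of a path. -/
def interm (p : List V) : Set V := {x | x ∈ (p.drop 1).dropLast}

/-- A reticulation cycle for the hybrid node `hend`: a pair of internally
disjoint nontrivial paths with the same origin (the split node), both ending
in `hend`. -/
structure RetCycle (N : EvoNet V) where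
  hend : V
  p : List V
  q : List V
  isPath_p : N.IsPath p
  isPath_q : N.IsPath q
  len_p : 2 ≤ p.length
  len_q : 2 ≤ q.length
  same_origin : p.head? = q.head?
  last_p : p.getLast? = some hend
  last_q : q.getLast? = some hend
  hybrid : N.IsHybrid hend
  intDisjoint : ∀ x : V, x ∈ interm p → x ∉ interm q
  ne : p ≠ q

/-- The nodes of a reticulation cycle. -/
def RetCycle.nodes {N : EvoNet V} (c : RetCycle N) : Set V :=
  {x | x ∈ c.p ∨ x ∈ c.q}

/-- The arcs of a reticulation cycle. -/
def RetCycle.arcs {N : EvoNet V} (c : RetCycle N) : Set (V × V) :=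
  {e | e ∈ c.p.zip c.p.tail ∨ e ∈ c.q.zip c.q.tail}

/-- The intermediate nodes of a reticulation cycle. -/
def RetCycle.intermNodes {N : EvoNet V} (c : RetCycle N) : Set V :=
  interm c.p ∪ interm c.q

/-- `s` is the split node of the reticulation cycle `c`. -/
def RetCycle.SplitIs {N : EvoNet V} (c : RetCycle N) (s : V) : Prop :=
  c.p.head? = some s

/-- Two reticulation cycles are the same (as unordered pairs of merge paths). -/
def RetCycle.Equiv {N : EvoNet V} (c₁ c₂ : RetCycle N) : Prop :=
  (c₁.p = c₂.p ∧ c₁.q = c₂.q) ∨ (c₁.p = c₂.q ∧ c₁.q = c₂.p)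

/-- 1-nested: no node is intermediate in reticulation cycles for two
different hybrid nodes. -/
def OneNested (N : EvoNet V) : Prop :=
  ∀ c₁ c₂ : RetCycle N, c₁.hend ≠ c₂.hend →
    ∀ x : V, x ∈ c₁.intermNodes → x ∉ c₂.intermNodes

/-- Galled tree: distinct reticulation cycles have disjoint node sets. -/
def Galled (N : EvoNet V) : Prop :=
  ∀ c₁ c₂ : RetCycle N, ¬ c₁.Equiv c₂ → Disjoint c₁.nodes c₂.nodes

/-- Weakly galled tree: distinct reticulation cycles have disjoint arc sets. -/
def WeaklyGalled (N : EvoNet V) : Prop :=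
  ∀ c₁ c₂ : RetCycle N, ¬ c₁.Equiv c₂ → Disjoint c₁.arcs c₂.arcs

/-- 2-hybrid: every hybrid node has in-degree exactly 2. -/
def TwoHybrid (N : EvoNet V) : Prop :=
  ∀ v : V, N.IsHybrid v →
    ∃ u w : V, u ≠ w ∧ N.arc u v ∧ N.arc w v ∧ ∀ z : V, N.arc z v → z = u ∨ z = w

/-- Hybrid-1: every hybrid node has out-degree exactly 1. -/
def HybridOne (N : EvoNet V) : Prop :=
  ∀ v : V, N.IsHybrid v → ∃! w : V, N.arc v w

/-- Semibinary: hybrid nodes have in-degree 2 and out-degree 1. -/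
def Semibinary (N : EvoNet V) : Prop := N.TwoHybrid ∧ N.HybridOne

/-- Node of out-degree exactly 2. -/
def OutDegTwo (N : EvoNet V) (v : V) : Prop :=
  ∃ u w : V, u ≠ w ∧ N.arc v u ∧ N.arc v w ∧ ∀ z : V, N.arc v z → z = u ∨ z = w

/-- An internal (non-leaf) node. -/
def IsInternal (N : EvoNet V) (v : V) : Prop := ∃ w : V, N.arc v w

/-- Binary (fully resolved): semibinary and internal tree nodes have
out-degree 2. -/
def Binary (N : EvoNet V) : Prop :=
  N.Semibinary ∧ ∀ v : V, N.IsTreeNode v → N.IsInternal v → N.OutDegTwo v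

/-- Undirected adjacency induced by a set of arcs. -/
def uadj (A : Set (V × V)) (x y : V) : Prop := (x, y) ∈ A ∨ (y, x) ∈ A

/-- The vertices of a subgraph given by a set of arcs. -/
def everts (A : Set (V × V)) : Set V := {x | ∃ y : V, (x, y) ∈ A ∨ (y, x) ∈ A}

/-- Connectedness of the underlying undirected graph of a set of arcs. -/
def EConnected (A : Set (V × V)) : Prop :=
  ∀ x y : V, x ∈ everts A → y ∈ everts A → Relation.ReflTransGen (uadj A) x y

/-- Remove a node and all arcs incident to it. -/
def avoid (A : Set (V × V)) (v : V) : Set (V × V) :=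
  {e ∈ A | e.1 ≠ v ∧ e.2 ≠ v}

/-- A biconnected subgraph of a network: a set of arcs of the network whose
underlying undirected graph is connected and remains connected after the
removal of any single node (with all arcs incident to it). -/
def Biconnected (N : EvoNet V) (A : Set (V × V)) : Prop :=
  (∀ e ∈ A, N.arc e.1 e.2) ∧ EConnected A ∧ ∀ v : V, EConnected (avoid A v)

/-- Level-1: no biconnected subgraph contains more than one hybrid node. -/
def LevelOne (N : EvoNet V) : Prop :=
  ∀ A : Set (V × V), N.Biconnected A →
    ∀ h₁ h₂ : V, N.IsHybrid h₁ → N.IsHybrid h₂ →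
      h₁ ∈ everts A → h₂ ∈ everts A → h₁ = h₂

/-- `v` is a descendant of `u`. -/
def Desc (N : EvoNet V) (u v : V) : Prop := Relation.ReflTransGen N.arc u v

/-- `v` is a proper descendant of `u`. -/
def ProperDesc (N : EvoNet V) (u v : V) : Prop := Relation.TransGen N.arc u v

/-- `w` is a minimal common ancestor of `u` and `v`: a common ancestor that is
a proper ancestor of no other common ancestor of them. -/
def IsMCA (N : EvoNet V) (w u v : V) : Prop :=
  N.Desc w u ∧ N.Desc w v ∧
    ∀ z : V, N.Desc z u → N.Desc z v → ¬ N.ProperDesc w z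

end EvoNet

/-!
A reticulation cycle is a pair of paths `σ :: P ++ [h]` and `σ :: Q ++ [h]` with disjoint
interiors `P` and `Q`, and any two distinct parents `a`, `b` of a node `x` close such a cycle
for `x`, along disjoint paths from a common ancestor of `a` and `b`.

Weakly galled ⇒ 1-nested: if `x` is intermediate in cycles for `h₁ ≠ h₂`, the arcs entering `x`
on the two cycles are distinct, so the cycle for `x` closed by them shares an arc with the first.

1-nested ⇒ no hybrid node `x` is intermediate in a cycle `C`: close a cycle `D` for `x` with the
parent `a` of `x` on `C` and another parent `b`. Then `a` is intermediate in both `C` and `D`,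
unless `a` is the split node of `D` or of `C`; in either case `C` and `D` share an intermediate
node, or splicing `D` into `C` gives a cycle for `C.hend` that shares one with `D`. So
intermediate nodes are tree nodes, and a cycle path is determined, backwards from its last arc,
by unique parents. With two parents per hybrid node a cycle is determined by its hybrid node,
which gives 1-nested ⇒ weakly galled.
-/

namespace List

variable {α : Type*} {r : α → α → Prop}

theorem mem_zip_tail_iff_infix {u v : α} :
    ∀ {l : List α}, (u, v) ∈ l.zip l.tail ↔ [u, v] <:+: l
  | [] => by simp
  | [a] => by simpa using fun h : [u, v] <:+: [a] => by simpa using h.length_le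
  | a :: b :: l => by
    rw [infix_cons_iff, ← mem_zip_tail_iff_infix]
    simp

theorem mem_of_pair_infix_cons {u v a : α} {l : List α} (h : [u, v] <:+: a :: l) : v ∈ l := by
  rcases infix_cons_iff.1 h with h | h
  · obtain ⟨t, ht⟩ := h
    cases l <;> simp_all
  · exact h.subset (by simp)

theorem exists_pair_infix_cons_of_mem {v a : α} :
    ∀ {l : List α}, v ∈ l → ∃ u, [u, v] <:+: a :: l
  | b :: l, h => by
    rcases mem_cons.1 h with rfl | h
    · exact ⟨a, [a, v] |>.prefix_append l |>.isInfix⟩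
    · obtain ⟨u, hu⟩ := exists_pair_infix_cons_of_mem (a := b) h
      exact ⟨u, hu.trans (infix_cons (suffix_refl _).isInfix)⟩

theorem exists_eq_append_cons_forall_not_of_exists_mem {p : α → Prop} :
    ∀ {l : List α}, (∃ y ∈ l, p y) → ∃ l₁ s l₂, l = l₁ ++ s :: l₂ ∧ p s ∧ ∀ y ∈ l₂, ¬ p y
  | [], h => by simp at h
  | a :: l, h => by
    by_cases hl : ∃ y ∈ l, p y
    · obtain ⟨l₁, s, l₂, rfl, hs, hl₂⟩ := exists_eq_append_cons_forall_not_of_exists_mem hl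
      exact ⟨a :: l₁, s, l₂, rfl, hs, hl₂⟩
    · simp only [not_exists, not_and] at hl
      obtain ⟨y, hy, hpy⟩ := h
      rcases mem_cons.1 hy with rfl | hy
      · exact ⟨[], y, l, rfl, hpy, hl⟩
      · exact absurd hpy (hl y hy)

theorem getLast?_cons_eq_some {s a : α} {l : List α} (h : (s :: l).getLast? = some a) :
    (l = [] ∧ a = s) ∨ l.getLast? = some a := by
  rw [getLast?_cons] at h
  cases hl : l.getLast? <;> simp_all

theorem dropLast_cons_append_singleton {a b : α} {l : List α} :
    (a :: (l ++ [b])).dropLast = a :: l := by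
  rw [← cons_append, dropLast_concat]

theorem IsChain.append_of_getLast? {l₁ l₂ : List α} {a : α} (h₁ : l₁.IsChain r)
    (ha : l₁.getLast? = some a) (h₂ : (a :: l₂).IsChain r) : (l₁ ++ l₂).IsChain r :=
  h₁.append h₂.tail (by simpa [ha] using h₂.rel_head?)

theorem IsChain.transGen_cons_of_mem {a y : α} {l : List α} (h : (a :: l).IsChain r)
    (hy : y ∈ l) : Relation.TransGen r a y :=
  (pairwise_cons.1 (h.imp fun _ _ => Relation.TransGen.single).pairwise).1 y hy

theorem IsChain.transGen_of_mem_interior {a b x : α} {l : List α}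
    (h : (a :: (l ++ [b])).IsChain r) (hx : x ∈ l) :
    Relation.TransGen r a x ∧ Relation.TransGen r x b := by
  refine ⟨h.transGen_cons_of_mem (mem_append_left _ hx), ?_⟩
  obtain ⟨l₁, l₂, rfl⟩ := append_of_mem hx
  exact (h.suffix (l₁ := x :: (l₂ ++ [b])) ⟨a :: l₁, by simp⟩).transGen_cons_of_mem (by simp)

end List

namespace EvoNet

open List Relation

variable {V : Type*} {N : EvoNet V}

theorem mem_interm_cons_append_singleton {a b x : V} {l : List V} :
    x ∈ interm (a :: (l ++ [b])) ↔ x ∈ l := by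
  simp [interm]

theorem ne_of_transGen {x y : V} (h : TransGen N.arc x y) : x ≠ y := by
  rintro rfl
  exact N.acyclic x h

theorem exists_common_ancestor_disjoint (N : EvoNet V) (a b : V) :
    ∃ s A B, (s :: A).IsChain N.arc ∧ (s :: B).IsChain N.arc ∧
      (s :: A).getLast? = some a ∧ (s :: B).getLast? = some b ∧ ∀ y ∈ A, y ∉ B := by
  obtain ⟨LA, hA, hLA⟩ := exists_isChain_cons_of_relationReflTransGen (N.rooted a)
  obtain ⟨LB, hB, hLB⟩ := exists_isChain_cons_of_relationReflTransGen (N.rooted b)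
  -- `s` is the last node of the root path to `a` that lies on the root path to `b`
  obtain ⟨A₁, s, A, hAeq, hs, hA₂⟩ :=
    exists_eq_append_cons_forall_not_of_exists_mem (p := (· ∈ N.root :: LB))
      ⟨N.root, mem_cons_self, mem_cons_self⟩
  obtain ⟨B₁, B, hBeq⟩ := append_of_mem hs
  refine ⟨s, A, B, hA.suffix ⟨A₁, hAeq.symm⟩, hB.suffix ⟨B₁, hBeq.symm⟩, ?_, ?_,
    fun y hy hyB => hA₂ y hy (by rw [hBeq]; simp [hyB])⟩
  · have := congrArg getLast? hAeq
    rw [getLast?_eq_some_getLast (cons_ne_nil _ _), hLA] at this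
    simpa using this.symm
  · have := congrArg getLast? hBeq
    rw [getLast?_eq_some_getLast (cons_ne_nil _ _), hLB] at this
    simpa using this.symm

namespace RetCycle

theorem isChain_p (c : RetCycle N) : c.p.IsChain N.arc := c.isPath_p.2

theorem isChain_q (c : RetCycle N) : c.q.IsChain N.arc := c.isPath_q.2

theorem exists_eq_cons_append (c : RetCycle N) :
    ∃ σ P Q, c.p = σ :: (P ++ [c.hend]) ∧ c.q = σ :: (Q ++ [c.hend]) := by
  have normal : ∀ l : List V, 2 ≤ l.length → l.getLast? = some c.hend →
      ∃ σ P, l = σ :: (P ++ [c.hend]) ∧ l.head? = some σ := by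
    rintro (_ | ⟨σ, t⟩) hlen hlast
    · simp at hlen
    · obtain ⟨P, z, rfl⟩ := t.eq_nil_or_concat'.resolve_left (by rintro rfl; simp at hlen)
      obtain rfl : z = c.hend := by simpa [getLast?_cons] using hlast
      exact ⟨σ, P, rfl, rfl⟩
  obtain ⟨σ, P, hp, hσ⟩ := normal c.p c.len_p c.last_p
  obtain ⟨σ', Q, hq, hσ'⟩ := normal c.q c.len_q c.last_q
  obtain rfl : σ = σ' := by simpa [hσ, hσ'] using c.same_origin
  exact ⟨σ, P, Q, hp, hq⟩

def ofInteriors (σ h : V) (P Q : List V) (hP : (σ :: (P ++ [h])).IsChain N.arc)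
    (hQ : (σ :: (Q ++ [h])).IsChain N.arc) (hh : N.IsHybrid h) (hdisj : ∀ x ∈ P, x ∉ Q)
    (hne : P ≠ Q) : RetCycle N where
  hend := h
  p := σ :: (P ++ [h])
  q := σ :: (Q ++ [h])
  isPath_p := ⟨cons_ne_nil _ _, hP⟩
  isPath_q := ⟨cons_ne_nil _ _, hQ⟩
  len_p := by simp
  len_q := by simp
  same_origin := rfl
  last_p := by simp [getLast?_cons]
  last_q := by simp [getLast?_cons]
  hybrid := hh
  intDisjoint x := by simpa only [mem_interm_cons_append_singleton] using hdisj x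
  ne := by simpa using hne

def swap (c : RetCycle N) : RetCycle N where
  hend := c.hend
  p := c.q
  q := c.p
  isPath_p := c.isPath_q
  isPath_q := c.isPath_p
  len_p := c.len_q
  len_q := c.len_p
  same_origin := c.same_origin.symm
  last_p := c.last_q
  last_q := c.last_p
  hybrid := c.hybrid
  intDisjoint x hq hp := c.intDisjoint x hp hq
  ne h := c.ne h.symm

theorem Equiv.hend_eq {c₁ c₂ : RetCycle N} (h : c₁.Equiv c₂) : c₁.hend = c₂.hend := by
  have := c₁.last_p
  rcases h with ⟨hp, -⟩ | ⟨hp, -⟩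
  · simpa [hp, c₂.last_p] using this.symm
  · simpa [hp, c₂.last_q] using this.symm

variable {c : RetCycle N} {σ σ' h h' : V} {P Q : List V}

theorem mem_intermNodes_iff (hp : c.p = σ :: (P ++ [h])) (hq : c.q = σ' :: (Q ++ [h']))
    {x : V} : x ∈ c.intermNodes ↔ x ∈ P ∨ x ∈ Q := by
  simp only [intermNodes, hp, hq, Set.mem_union, mem_interm_cons_append_singleton]

theorem notMem_of_mem_interior (hp : c.p = σ :: (P ++ [h])) (hq : c.q = σ' :: (Q ++ [h']))
    {x : V} (hx : x ∈ P) : x ∉ Q := by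
  have := c.intDisjoint x (by rwa [hp, mem_interm_cons_append_singleton])
  rwa [hq, mem_interm_cons_append_singleton] at this

theorem hend_eq_of_p_eq (hp : c.p = σ :: (P ++ [h])) : c.hend = h := by
  simpa [hp, getLast?_cons] using c.last_p.symm

theorem ne_hend_of_mem_intermNodes {x : V} (hx : x ∈ c.intermNodes) : x ≠ c.hend := by
  obtain ⟨σ, P, Q, hp, hq⟩ := c.exists_eq_cons_append
  rcases (c.mem_intermNodes_iff hp hq).1 hx with hx | hx
  · exact ne_of_transGen ((hp ▸ c.isChain_p).transGen_of_mem_interior hx).2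
  · exact ne_of_transGen ((hq ▸ c.isChain_q).transGen_of_mem_interior hx).2

theorem arc_of_mem_arcs {u v : V} (h : (u, v) ∈ c.arcs) : N.arc u v := by
  rcases h with h | h
  · exact isChain_pair.1 (c.isChain_p.infix (mem_zip_tail_iff_infix.1 h))
  · exact isChain_pair.1 (c.isChain_q.infix (mem_zip_tail_iff_infix.1 h))

theorem mem_intermNodes_or_eq_hend_of_mem_arcs {u v : V} (h : (u, v) ∈ c.arcs) :
    v ∈ c.intermNodes ∨ v = c.hend := by
  obtain ⟨σ, P, Q, hp, hq⟩ := c.exists_eq_cons_append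
  rw [c.mem_intermNodes_iff hp hq]
  rcases h with h | h
  · rw [mem_zip_tail_iff_infix, hp] at h
    have := mem_of_pair_infix_cons h
    simp only [mem_append, mem_singleton] at this
    tauto
  · rw [mem_zip_tail_iff_infix, hq] at h
    have := mem_of_pair_infix_cons h
    simp only [mem_append, mem_singleton] at this
    tauto

theorem exists_mem_arcs_of_mem_intermNodes {x : V} (hx : x ∈ c.intermNodes) :
    ∃ u, (u, x) ∈ c.arcs := by
  obtain ⟨σ, P, Q, hp, hq⟩ := c.exists_eq_cons_append
  rcases (c.mem_intermNodes_iff hp hq).1 hx with hx | hx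
  · obtain ⟨u, hu⟩ := exists_pair_infix_cons_of_mem (a := σ) hx
    refine ⟨u, Or.inl (mem_zip_tail_iff_infix.2 ?_)⟩
    rw [hp]
    exact hu.trans (prefix_append _ _).isInfix
  · obtain ⟨u, hu⟩ := exists_pair_infix_cons_of_mem (a := σ) hx
    refine ⟨u, Or.inr (mem_zip_tail_iff_infix.2 ?_)⟩
    rw [hq]
    exact hu.trans (prefix_append _ _).isInfix

end RetCycle

theorem exists_retCycle_of_arcs {a b x : V} (hab : a ≠ b) (ha : N.arc a x) (hb : N.arc b x) :
    ∃ (D : RetCycle N) (s : V) (A B : List V), D.p = s :: (A ++ [x]) ∧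
      D.q = s :: (B ++ [x]) ∧ (s :: A).getLast? = some a ∧ (s :: B).getLast? = some b := by
  obtain ⟨s, A, B, hsA, hsB, hA, hB, hAB⟩ := exists_common_ancestor_disjoint N a b
  have hsAx : (s :: (A ++ [x])).IsChain N.arc := by
    simpa using hsA.append_of_getLast? hA (isChain_pair.2 ha)
  have hsBx : (s :: (B ++ [x])).IsChain N.arc := by
    simpa using hsB.append_of_getLast? hB (isChain_pair.2 hb)
  exact ⟨RetCycle.ofInteriors s x A B hsAx hsBx ⟨a, b, hab, ha, hb⟩ hAB
    (fun e => hab (Option.some.inj (hA.symm.trans (e ▸ hB)))), s, A, B, rfl, rfl, hA, hB⟩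

theorem WeaklyGalled.oneNested (hWG : N.WeaklyGalled) : N.OneNested := by
  intro c₁ c₂ hne x hx₁ hx₂
  obtain ⟨u₁, hu₁⟩ := c₁.exists_mem_arcs_of_mem_intermNodes hx₁
  obtain ⟨u₂, hu₂⟩ := c₂.exists_mem_arcs_of_mem_intermNodes hx₂
  have hu : u₁ ≠ u₂ := by
    rintro rfl
    exact Set.disjoint_left.1 (hWG c₁ c₂ fun h => hne h.hend_eq) hu₁ hu₂
  obtain ⟨D, s, A, -, hDp, -, hA, -⟩ :=
    exists_retCycle_of_arcs hu (RetCycle.arc_of_mem_arcs hu₁) (RetCycle.arc_of_mem_arcs hu₂)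
  have hDc₁ : ¬ D.Equiv c₁ := fun h =>
    RetCycle.ne_hend_of_mem_intermNodes hx₁ (D.hend_eq_of_p_eq hDp ▸ h.hend_eq)
  have hu₁D : (u₁, x) ∈ D.arcs := by
    refine Or.inl (mem_zip_tail_iff_infix.2 ⟨(s :: A).dropLast, [], ?_⟩)
    rw [hDp, ← cons_append, ← dropLast_append_getLast? u₁ hA]
    simp
  exact Set.disjoint_left.1 (hWG D c₁ hDc₁) hu₁D hu₁

namespace OneNested

/-- An arc `a → x` of a cycle, with `x` hybrid and intermediate, has no bypass `a → B → x`. -/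
theorem false_of_bypass (hON : N.OneNested) {C : RetCycle N} {σ a x : V} {P₁ P₂ Q B : List V}
    (hp : C.p = σ :: (P₁ ++ x :: P₂ ++ [C.hend])) (hq : C.q = σ :: (Q ++ [C.hend]))
    (ha : (σ :: P₁).getLast? = some a) (hB : (a :: (B ++ [x])).IsChain N.arc) (hBne : B ≠ [])
    (hx : N.IsHybrid x) : False := by
  have hCp : (σ :: P₁ ++ x :: (P₂ ++ [C.hend])).IsChain N.arc := by simpa [hp] using C.isChain_p
  have hxh : x ≠ C.hend := ne_of_transGen ((hp ▸ C.isChain_p).transGen_of_mem_interior (by simp)).2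
  have hax : N.arc a x := (isChain_append.1 hCp).2.2 a ha x rfl
  let D := RetCycle.ofInteriors a x [] B (isChain_pair.2 hax) hB hx (by simp) hBne.symm
  have hBD : ∀ y ∈ B, y ∈ D.intermNodes := fun y hy =>
    (D.mem_intermNodes_iff rfl rfl).2 (Or.inr hy)
  by_cases hBQ : ∃ y ∈ B, y ∈ Q
  · obtain ⟨y, hyB, hyQ⟩ := hBQ
    exact hON D C hxh y (hBD y hyB) ((C.mem_intermNodes_iff hp hq).2 (Or.inr hyQ))
  simp only [not_exists, not_and] at hBQ
  -- `E` reroutes `C.p` through the bypass, whose interior is intermediate in `D` too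
  have hdisj : ∀ y ∈ P₁ ++ B ++ x :: P₂, y ∉ Q := by
    intro y hy
    rcases mem_append.1 hy with hy | hy
    · rcases mem_append.1 hy with hy | hy
      · exact C.notMem_of_mem_interior hp hq (mem_append_left _ hy)
      · exact hBQ y hy
    · exact C.notMem_of_mem_interior hp hq (mem_append_right _ hy)
  have hEp : (σ :: (P₁ ++ B ++ x :: P₂ ++ [C.hend])).IsChain N.arc := by
    have := hCp.left_of_append.append_of_getLast? ha
      (hB.append_of_getLast? (by simp [getLast?_cons]) hCp.right_of_append)
    simpa using this
  let E := RetCycle.ofInteriors σ C.hend _ Q hEp (hq ▸ C.isChain_q) C.hybrid hdisj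
    fun e => hdisj x (by simp) (e ▸ by simp)
  obtain ⟨z, hz⟩ := exists_mem_of_ne_nil B hBne
  exact hON E D (Ne.symm hxh) z ((E.mem_intermNodes_iff rfl rfl).2 (Or.inl (by simp [hz])))
    (hBD z hz)

/-- If `x` follows the split node `σ` on `C.p`, then no cycle for `x` enters `x` from `σ` as an
intermediate node. -/
theorem false_of_split_mem_interior (hON : N.OneNested) {C D : RetCycle N} {σ s x : V}
    {P₂ Q A B : List V} (hp : C.p = σ :: (x :: P₂ ++ [C.hend]))
    (hq : C.q = σ :: (Q ++ [C.hend])) (hDp : D.p = s :: (A ++ [x]))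
    (hDq : D.q = s :: (B ++ [x])) (hσ : A.getLast? = some σ) : False := by
  have hCp : (σ :: x :: (P₂ ++ [C.hend])).IsChain N.arc := by simpa [hp] using C.isChain_p
  have hxh : x ≠ C.hend := ne_of_transGen (hCp.transGen_of_mem_interior mem_cons_self).2
  have hDx : D.hend = x := D.hend_eq_of_p_eq hDp
  have hσA : σ ∈ A := mem_of_getLast? hσ
  by_cases hBQ : ∃ y ∈ B, y ∈ Q
  · obtain ⟨y, hyB, hyQ⟩ := hBQ
    exact hON D C (hDx ▸ hxh) y ((D.mem_intermNodes_iff hDp hDq).2 (Or.inr hyB))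
      ((C.mem_intermNodes_iff hp hq).2 (Or.inr hyQ))
  simp only [not_exists, not_and] at hBQ
  -- the cycle `s → B → x → P₂ → C.hend`, `s → A → σ → Q → C.hend` has `σ` as intermediate node
  have hAx : ∀ y ∈ A, TransGen N.arc y x := fun y hy =>
    ((hDp ▸ D.isChain_p).transGen_of_mem_interior hy).2
  have hdisj : ∀ y ∈ B ++ x :: P₂, y ∉ A ++ Q := by
    intro y hy hy'
    simp only [mem_append, mem_cons] at hy hy'
    rcases hy with hyB | rfl | hyP₂ <;> rcases hy' with hyA | hyQ
    · exact D.notMem_of_mem_interior hDp hDq hyA hyB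
    · exact hBQ y hyB hyQ
    · exact ne_of_transGen (hAx y hyA) rfl
    · exact C.notMem_of_mem_interior hp hq mem_cons_self hyQ
    · exact N.acyclic y ((hAx y hyA).trans (hCp.tail.transGen_of_mem_interior hyP₂).1)
    · exact C.notMem_of_mem_interior hp hq (mem_cons_of_mem _ hyP₂) hyQ
  have hEp : (s :: (B ++ x :: P₂ ++ [C.hend])).IsChain N.arc := by
    have := (hDq ▸ D.isChain_q).append_of_getLast? (by simp [getLast?_cons]) hCp.tail
    simpa using this
  have hEq : (s :: (A ++ Q ++ [C.hend])).IsChain N.arc := by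
    have hsA : (s :: A).IsChain N.arc := (hDp ▸ D.isChain_p).prefix ⟨[x], by simp⟩
    have := hsA.append_of_getLast? (by simp [getLast?_cons, hσ]) (hq ▸ C.isChain_q)
    simpa using this
  let E := RetCycle.ofInteriors s C.hend _ _ hEp hEq C.hybrid hdisj
    fun e => hdisj x (by simp) (e ▸ by simp)
  exact hON E D (hDx ▸ Ne.symm hxh) σ
    ((E.mem_intermNodes_iff rfl rfl).2 (Or.inr (mem_append_left _ hσA)))
    ((D.mem_intermNodes_iff hDp hDq).2 (Or.inl hσA))

theorem not_isHybrid_of_mem_interm_p (hON : N.OneNested) (C : RetCycle N) {x : V}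
    (hx : x ∈ interm C.p) : ¬ N.IsHybrid x := by
  intro hxh
  obtain ⟨σ, P, Q, hp, hq⟩ := C.exists_eq_cons_append
  rw [hp, mem_interm_cons_append_singleton] at hx
  obtain ⟨P₁, P₂, rfl⟩ := append_of_mem hx
  obtain ⟨a, ha⟩ : ∃ a, (σ :: P₁).getLast? = some a :=
    ⟨_, getLast?_eq_some_getLast (cons_ne_nil _ _)⟩
  have hCp : (σ :: P₁ ++ x :: (P₂ ++ [C.hend])).IsChain N.arc := by simpa [hp] using C.isChain_p
  have hax : N.arc a x := (isChain_append.1 hCp).2.2 a ha x rfl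
  obtain ⟨b, hba, hbx⟩ : ∃ b, b ≠ a ∧ N.arc b x := by
    obtain ⟨u, w, huw, hu, hw⟩ := hxh
    by_cases hua : u = a
    · exact ⟨w, hua ▸ huw.symm, hw⟩
    · exact ⟨u, hua, hu⟩
  obtain ⟨D, s, A, B, hDp, hDq, hA, hB⟩ := exists_retCycle_of_arcs hba.symm hax hbx
  -- `a` is the split node of `D`, the split node of `C`, or intermediate in both
  rcases getLast?_cons_eq_some hA with ⟨rfl, rfl⟩ | hA
  · refine hON.false_of_bypass hp hq ha (hDq ▸ D.isChain_q) ?_ hxh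
    rintro rfl
    exact hba (by simpa using hB.symm)
  rcases getLast?_cons_eq_some ha with ⟨rfl, rfl⟩ | haP₁
  · exact hON.false_of_split_mem_interior hp hq hDp hDq hA
  · refine hON D C ?_ a ((D.mem_intermNodes_iff hDp hDq).2 (Or.inl (mem_of_getLast? hA)))
      ((C.mem_intermNodes_iff hp hq).2 (Or.inl (by simp [mem_of_getLast? haP₁])))
    rw [D.hend_eq_of_p_eq hDp]
    exact ne_of_transGen ((hp ▸ C.isChain_p).transGen_of_mem_interior hx).2

theorem not_isHybrid_of_mem_intermNodes (hON : N.OneNested) {C : RetCycle N} {x : V}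
    (hx : x ∈ C.intermNodes) : ¬ N.IsHybrid x := by
  rcases hx with hx | hx
  · exact hON.not_isHybrid_of_mem_interm_p C hx
  · exact hON.not_isHybrid_of_mem_interm_p C.swap hx

end OneNested

/-- Tree nodes have a unique parent, so backward walks from a common node through tree nodes
agree as long as both last. -/
theorem prefix_or_prefix_of_isChain_flip {r₁ r₂ : List V} (h₁ : r₁.IsChain (flip N.arc))
    (h₂ : r₂.IsChain (flip N.arc)) (hhd : r₁.head? = r₂.head?)
    (ht₁ : ∀ y ∈ r₁.dropLast, ¬ N.IsHybrid y) (ht₂ : ∀ y ∈ r₂.dropLast, ¬ N.IsHybrid y) :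
    r₁ <+: r₂ ∨ r₂ <+: r₁ := by
  induction r₁ generalizing r₂ with
  | nil => exact Or.inl nil_prefix
  | cons v t₁ ih =>
    rcases r₂ with _ | ⟨v', t₂⟩
    · exact Or.inr nil_prefix
    obtain rfl : v = v' := by simpa using hhd
    rcases t₁ with _ | ⟨a, t₁⟩
    · simp
    rcases t₂ with _ | ⟨b, t₂⟩
    · simp
    obtain rfl : a = b := by
      by_contra hab
      exact ht₁ v (by simp) ⟨a, b, hab, h₁.rel, h₂.rel⟩
    have := ih (r₂ := a :: t₂) h₁.tail h₂.tail rfl (fun y hy => ht₁ y (by simp_all))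
      (fun y hy => ht₂ y (by simp_all))
    simpa using this

theorem TwoHybrid.eq_and_eq_or_eq_and_eq (h2 : N.TwoHybrid) {h u w u' w' : V}
    (hh : N.IsHybrid h) (hu : N.arc u h) (hw : N.arc w h) (huw : u ≠ w) (hu' : N.arc u' h)
    (hw' : N.arc w' h) (huw' : u' ≠ w') : (u' = u ∧ w' = w) ∨ (u' = w ∧ w' = u) := by
  obtain ⟨p₁, p₂, -, -, -, hall⟩ := h2 h hh
  have := hall u hu
  have := hall w hw
  have := hall u' hu'
  have := hall w' hw'
  grind

namespace RetCycle

theorem exists_penultimate (c : RetCycle N) :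
    ∃ u, c.p.dropLast.getLast? = some u ∧ N.arc u c.hend := by
  obtain ⟨σ, P, -, hp, -⟩ := c.exists_eq_cons_append
  have hc : (σ :: P ++ [c.hend]).IsChain N.arc := by simpa [hp] using c.isChain_p
  refine ⟨_, by rw [hp, dropLast_cons_append_singleton, getLast?_eq_some_getLast (cons_ne_nil _ _)],
    ?_⟩
  exact (isChain_append.1 hc).2.2 _ (getLast?_eq_some_getLast (cons_ne_nil _ _)) _ rfl

theorem penultimate_ne (c : RetCycle N) : c.p.dropLast.getLast? ≠ c.q.dropLast.getLast? := by
  obtain ⟨σ, P, Q, hp, hq⟩ := c.exists_eq_cons_append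
  rw [hp, hq, dropLast_cons_append_singleton, dropLast_cons_append_singleton]
  intro e
  obtain ⟨u, hu⟩ : ∃ u, (σ :: P).getLast? = some u :=
    ⟨_, getLast?_eq_some_getLast (cons_ne_nil _ _)⟩
  have hu' := e ▸ hu
  rcases getLast?_cons_eq_some hu with ⟨hP, rfl⟩ | huP <;>
    rcases getLast?_cons_eq_some hu' with ⟨hQ, hσ⟩ | huQ
  · exact c.ne (by rw [hp, hq, hP, hQ])
  · exact N.acyclic _ ((hq ▸ c.isChain_q).transGen_of_mem_interior (mem_of_getLast? huQ)).1
  · subst hσ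
    exact N.acyclic _ ((hp ▸ c.isChain_p).transGen_of_mem_interior (mem_of_getLast? huP)).1
  · exact c.notMem_of_mem_interior hp hq (mem_of_getLast? huP) (mem_of_getLast? huQ)

theorem p_eq_of_isSuffix {c c' : RetCycle N} (hp : c.p <:+ c'.p)
    (hq : c.q <:+ c'.q ∨ c'.q <:+ c.q) : c.p = c'.p := by
  obtain ⟨σ, P, Q, hcp, hcq⟩ := c.exists_eq_cons_append
  obtain ⟨σ', P', Q', hcp', hcq'⟩ := c'.exists_eq_cons_append
  obtain ⟨_ | ⟨t, S⟩, hS⟩ := hp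
  · simpa using hS
  exfalso
  have hσP' : σ ∈ P' := by
    have := congrArg dropLast hS
    rw [hcp, hcp', dropLast_cons_append_singleton, cons_append,
      show S ++ σ :: (P ++ [c.hend]) = S ++ σ :: P ++ [c.hend] by simp,
      dropLast_cons_append_singleton, cons.injEq] at this
    simp [← this.2]
  obtain ⟨hσ'σ, hσh'⟩ := (hcp' ▸ c'.isChain_p).transGen_of_mem_interior hσP'
  rcases hq with hq | hq
  · have hσ : σ ∈ c'.q := hq.subset (by simp [hcq])
    rw [hcq', mem_cons, mem_append, mem_singleton] at hσ
    rcases hσ with rfl | hσQ' | rfl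
    · exact N.acyclic _ hσ'σ
    · exact c'.notMem_of_mem_interior hcp' hcq' hσP' hσQ'
    · exact N.acyclic _ hσh'
  · have hσ' : σ' ∈ c.q := hq.subset (by simp [hcq'])
    rw [hcq, mem_cons] at hσ'
    rcases hσ' with rfl | hσ'
    · exact N.acyclic _ hσ'σ
    · exact N.acyclic _ (hσ'σ.trans ((hcq ▸ c.isChain_q).transGen_cons_of_mem hσ'))

end RetCycle

namespace OneNested

theorem isSuffix_or_isSuffix_p (hON : N.OneNested) {c c' : RetCycle N} (hh : c.hend = c'.hend)
    (hu : c.p.dropLast.getLast? = c'.p.dropLast.getLast?) : c.p <:+ c'.p ∨ c'.p <:+ c.p := by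
  obtain ⟨σ, P, Q, hp, hq⟩ := c.exists_eq_cons_append
  obtain ⟨σ', P', Q', hp', hq'⟩ := c'.exists_eq_cons_append
  have hP : ∀ y ∈ P, ¬ N.IsHybrid y := fun y hy =>
    hON.not_isHybrid_of_mem_intermNodes ((c.mem_intermNodes_iff hp hq).2 (Or.inl hy))
  have hP' : ∀ y ∈ P', ¬ N.IsHybrid y := fun y hy =>
    hON.not_isHybrid_of_mem_intermNodes ((c'.mem_intermNodes_iff hp' hq').2 (Or.inl hy))
  have hc : (σ :: P).IsChain N.arc := (hp ▸ c.isChain_p).prefix ⟨[c.hend], by simp⟩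
  have hc' : (σ' :: P').IsChain N.arc := (hp' ▸ c'.isChain_p).prefix ⟨[c'.hend], by simp⟩
  rw [hp, hp', dropLast_cons_append_singleton, dropLast_cons_append_singleton] at hu
  have := prefix_or_prefix_of_isChain_flip (isChain_reverse.2 hc) (isChain_reverse.2 hc')
    (by rw [head?_reverse, head?_reverse, hu]) (by simpa using hP) (by simpa using hP')
  rw [hp, hp', ← hh, ← cons_append, ← cons_append, suffix_append_self_iff, suffix_append_self_iff]
  simpa only [reverse_prefix] using this

theorem eq_of_penultimate_eq (hON : N.OneNested) {c c' : RetCycle N} (hh : c.hend = c'.hend)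
    (hpu : c.p.dropLast.getLast? = c'.p.dropLast.getLast?)
    (hqu : c.q.dropLast.getLast? = c'.q.dropLast.getLast?) : c.p = c'.p ∧ c.q = c'.q := by
  have hp := hON.isSuffix_or_isSuffix_p hh hpu
  have hq := hON.isSuffix_or_isSuffix_p (c := c.swap) (c' := c'.swap) hh hqu
  have hpp : c.p = c'.p := hp.elim (fun h => RetCycle.p_eq_of_isSuffix h hq)
    (fun h => (RetCycle.p_eq_of_isSuffix h hq.symm).symm)
  refine ⟨hpp, hq.elim (fun h => ?_) (fun h => ?_)⟩
  · exact RetCycle.p_eq_of_isSuffix (c := c.swap) (c' := c'.swap) h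
      (Or.inl (show c.p <:+ c'.p from hpp ▸ suffix_refl _))
  · exact (RetCycle.p_eq_of_isSuffix (c := c'.swap) (c' := c.swap) h
      (Or.inl (show c'.p <:+ c.p from hpp ▸ suffix_refl _))).symm

theorem equiv_of_hend_eq (hON : N.OneNested) (h2 : N.TwoHybrid) {c c' : RetCycle N}
    (hh : c.hend = c'.hend) : c.Equiv c' := by
  obtain ⟨u, hu, hua⟩ := c.exists_penultimate
  obtain ⟨w, hw, hwa⟩ := c.swap.exists_penultimate
  obtain ⟨u', hu', hua'⟩ := c'.exists_penultimate
  obtain ⟨w', hw', hwa'⟩ := c'.swap.exists_penultimate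
  have huw : u ≠ w := fun e => c.penultimate_ne (hu.trans (e ▸ hw.symm))
  have huw' : u' ≠ w' := fun e => c'.penultimate_ne (hu'.trans (e ▸ hw'.symm))
  replace hua' : N.arc u' c.hend := hh ▸ hua'
  replace hwa' : N.arc w' c.hend := hh ▸ hwa'
  rcases h2.eq_and_eq_or_eq_and_eq c.hybrid hua hwa huw hua' hwa' huw' with
    ⟨rfl, rfl⟩ | ⟨rfl, rfl⟩
  · exact Or.inl (hON.eq_of_penultimate_eq hh (hu.trans hu'.symm) (hw.trans hw'.symm))
  · exact Or.inr (hON.eq_of_penultimate_eq (c' := c'.swap) hh (hu.trans hw'.symm)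
      (hw.trans hu'.symm))

theorem weaklyGalled (hON : N.OneNested) (h2 : N.TwoHybrid) : N.WeaklyGalled := by
  intro c₁ c₂ hne
  refine Set.disjoint_left.2 fun ⟨u, v⟩ h₁ h₂ => ?_
  by_cases hh : c₁.hend = c₂.hend
  · exact hne (hON.equiv_of_hend_eq h2 hh)
  rcases c₁.mem_intermNodes_or_eq_hend_of_mem_arcs h₁ with hv₁ | rfl <;>
    rcases c₂.mem_intermNodes_or_eq_hend_of_mem_arcs h₂ with hv₂ | hv₂
  · exact hON c₁ c₂ hh v hv₁ hv₂
  · exact hON.not_isHybrid_of_mem_intermNodes hv₁ (hv₂ ▸ c₂.hybrid)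
  · exact hON.not_isHybrid_of_mem_intermNodes hv₂ c₁.hybrid
  · exact hh hv₂

end OneNested

end EvoNet

theorem twoHybrid_oneNested_iff_weaklyGalled {V : Type*} (N : EvoNet V)
    (h2 : N.TwoHybrid) : N.OneNested ↔ N.WeaklyGalled :=
  ⟨fun hON => hON.weaklyGalled h2, EvoNet.WeaklyGalled.oneNested⟩
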